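/- Let A and B be commuting bounded linear operators on a complex Hilbert space H, both with closed range, satisfying R(A) = R(A*) and R(B) = R(B*). Then AB has closed range and R(AB) = R((AB)*). -/

import Mathlib

/-!
If `B` commutes with `A` and `H = R(B) ⊕ N(B)`, then `R(AB) = R(A) ∩ R(B)`: for `Aa ∈ R(B)` write
`a = Bv + u` with `Bu = 0`; then `Au = Aa - BAv ∈ R(B)` and `BAu = ABu = 0`, so `Au = 0` and
`Aa = ABv`. A closed-range operator with `R(B) = R(B*)` has `N(B) = R(B*)ᗮ = R(B)ᗮ`, hence such a
splitting. Applying this to `(A, B)` and to `(B*, A*)` gives `R(AB) = R(A) ∩ R(B)`, which is closed,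
and `R((AB)*) = R(B*) ∩ R(A*) = R(B) ∩ R(A)`.
-/

theorem LinearMap.range_comp_eq_inf_range_of_isCompl {R M : Type*} [Ring R] [AddCommGroup M]
    [Module R M] {f g : M →ₗ[R] M} (hcomm : f ∘ₗ g = g ∘ₗ f)
    (hg : IsCompl (LinearMap.range g) (LinearMap.ker g)) :
    LinearMap.range (f ∘ₗ g) = LinearMap.range f ⊓ LinearMap.range g := by
  have hfg (x : M) : f (g x) = g (f x) := LinearMap.congr_fun hcomm x
  refine le_antisymm (le_inf (LinearMap.range_comp_le_range g f) ?_) ?_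
  · rw [hcomm]; exact LinearMap.range_comp_le_range f g
  rintro _ ⟨⟨a, rfl⟩, hfa⟩
  obtain ⟨_, ⟨v, rfl⟩, u, hu, rfl⟩ :=
    Submodule.mem_sup.1 (hg.sup_eq_top ▸ Submodule.mem_top (x := a))
  have hfu : f u = 0 := by
    refine (Submodule.disjoint_def.1 hg.disjoint) (f u) ?_ ?_
    · simpa [map_add, hfg] using Submodule.sub_mem _ hfa (LinearMap.mem_range_self g (f v))
    · rw [LinearMap.mem_ker] at hu ⊢
      rw [← hfg, hu, map_zero]
  exact ⟨v, by simp [hfu]⟩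

namespace ContinuousLinearMap

variable {𝕜 E : Type*} [RCLike 𝕜] [NormedAddCommGroup E] [InnerProductSpace 𝕜 E] [CompleteSpace E]

theorem isCompl_range_ker_of_range_eq_range_adjoint {T : E →L[𝕜] E}
    (hclosed : IsClosed (Set.range T)) (hT : T.range = (adjoint T).range) :
    IsCompl T.range T.ker := by
  have : CompleteSpace T.range := hclosed.isComplete.completeSpace_coe
  rw [hT, ← adjoint_adjoint T, ← orthogonal_range, adjoint_adjoint, ← hT]
  exact Submodule.isCompl_orthogonal T.range

theorem range_comp_eq_inf_range_of_range_eq_range_adjoint {A B : E →L[𝕜] E}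
    (hcomm : A ∘L B = B ∘L A) (hclosed : IsClosed (Set.range B)) (hB : B.range = (adjoint B).range) :
    (A ∘L B).range = A.range ⊓ B.range :=
  LinearMap.range_comp_eq_inf_range_of_isCompl
    (LinearMap.ext (ContinuousLinearMap.ext_iff.1 hcomm))
    (isCompl_range_ker_of_range_eq_range_adjoint hclosed hB)

end ContinuousLinearMap

open ContinuousLinearMap in
theorem stmt16 {H : Type*} [NormedAddCommGroup H] [InnerProductSpace ℂ H] [CompleteSpace H]
    (A B : H →L[ℂ] H) (hcomm : A ∘L B = B ∘L A)
    (hAran : IsClosed (Set.range A)) (hBran : IsClosed (Set.range B))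
    (hA : LinearMap.range (A : H →ₗ[ℂ] H) = LinearMap.range ((ContinuousLinearMap.adjoint A : H →L[ℂ] H) : H →ₗ[ℂ] H))
    (hB : LinearMap.range (B : H →ₗ[ℂ] H) = LinearMap.range ((ContinuousLinearMap.adjoint B : H →L[ℂ] H) : H →ₗ[ℂ] H)) :
    IsClosed (Set.range (A ∘L B)) ∧
      LinearMap.range ((A ∘L B : H →L[ℂ] H) : H →ₗ[ℂ] H) = LinearMap.range ((ContinuousLinearMap.adjoint (A ∘L B) : H →L[ℂ] H) : H →ₗ[ℂ] H) := by
  have hAB : (A ∘L B).range = A.range ⊓ B.range :=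
    range_comp_eq_inf_range_of_range_eq_range_adjoint hcomm hBran hB
  have hcomm' : adjoint B ∘L adjoint A = adjoint A ∘L adjoint B := by
    rw [← adjoint_comp, ← adjoint_comp, hcomm]
  have hAset : Set.range (adjoint A) = Set.range A := by
    simpa only [LinearMap.coe_range, coe_coe] using congr(($hA : Set H)).symm
  have hAran' : IsClosed (Set.range (adjoint A)) := hAset ▸ hAran
  have hA' : (adjoint A).range = (adjoint (adjoint A)).range := by rw [adjoint_adjoint, hA]
  have hBA : (adjoint B ∘L adjoint A).range = (adjoint B).range ⊓ (adjoint A).range :=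
    range_comp_eq_inf_range_of_range_eq_range_adjoint hcomm' hAran' hA'
  constructor
  · have hset : Set.range (A ∘L B) = Set.range A ∩ Set.range B := by
      simpa only [Submodule.coe_inf, LinearMap.coe_range, coe_coe] using congr(($hAB : Set H))
    exact hset ▸ hAran.inter hBran
  · rw [adjoint_comp, hAB, hBA, ← hA, ← hB, inf_comm]
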